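/- arXiv:2510.17578 — 2 statements merged into one kernel-verified Lean document; each statement's English description precedes it below -/
import Mathlib

section
/- Assume ‖∇L(Θ*)‖_{∞,∞} ≤ λ/2, that |S_j| ≤ s for every 1 ≤ j ≤ d, and let Θ̂ be a global minimizer over ℝ^{m×d} of Θ ↦ L(Θ) + λ‖Θ‖_{1,1}. Then for every column index 1 ≤ j ≤ d, ⟨(∇L(Θ̂))_{·,j} − (∇L(Θ*))_{·,j}, Θ̂_{·,j} − Θ*_{·,j}⟩ ≤ 6 λ √s ‖Θ̂_{·,j} − Θ*_{·,j}‖₂, where ⟨·,·⟩ is the Euclidean inner product on ℝ^m and ‖·‖₂ the Euclidean norm. -/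
/-!
Fix a column `j`, let `S` be the support of `Θ*_{·,j}` and `Δ = Θ̂_{·,j} − Θ*_{·,j}`. The objective
separates over columns, so comparing `Θ̂` with `Θ̂` whose `j`-th column is replaced by `Θ*_{·,j}`
gives the basic inequality for that column alone. As `L` is quadratic, the left-hand side is
`(1/T)‖XΔ‖²`, and expanding the loss around `Θ*` turns the basic inequality into
`(1/(2T))‖XΔ‖² ≤ (λ/2)‖Δ‖₁ + λ(‖Δ_S‖₁ − ‖Δ_{Sᶜ}‖₁) ≤ (3λ/2)‖Δ_S‖₁ ≤ (3λ/2)√s‖Δ‖₂`,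
the last step by Cauchy–Schwarz on `S`.
-/

open Matrix Finset

section

variable {τ ι κ : Type*} [Fintype τ] [Fintype ι] [Fintype κ]

theorem le_of_sum_le_sum_update {α : Type*} [DecidableEq κ] (f : κ → α → ℝ) (a : κ → α)
    (j : κ) (b : α) (h : ∑ k, f k (a k) ≤ ∑ k, f k (Function.update a j b k)) :
    f j (a j) ≤ f j b := by
  simp only [Function.apply_update f, sum_update_of_mem (mem_univ j)] at h
  rw [sum_eq_add_sum_sdiff_singleton j _ (fun hj => absurd (mem_univ j) hj)] at h
  linarith

theorem abs_dotProduct_le_mul_sum_abs {c : ℝ} (g v : ι → ℝ) (hg : ∀ i, |g i| ≤ c) :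
    |g ⬝ᵥ v| ≤ c * ∑ i, |v i| :=
  calc |g ⬝ᵥ v| ≤ ∑ i, |g i * v i| := abs_sum_le_sum_abs _ _
    _ ≤ ∑ i, c * |v i| := sum_le_sum fun i _ => by
        rw [abs_mul]; exact mul_le_mul_of_nonneg_right (hg i) (abs_nonneg _)
    _ = c * ∑ i, |v i| := (mul_sum _ _ _).symm

theorem sum_abs_sub_sum_abs_le (a b : ι → ℝ) :
    ∑ i, |a i| - ∑ i, |b i|
      ≤ ∑ i ∈ univ.filter (fun i => a i ≠ 0), |b i - a i|
        - ∑ i ∈ univ.filter (fun i => a i = 0), |b i - a i| := by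
  rw [← sum_sub_distrib, ← sum_filter_not_add_sum_filter _ (fun i => a i = 0)]
  have on_support : ∑ i ∈ univ.filter (fun i => a i ≠ 0), (|a i| - |b i|)
      ≤ ∑ i ∈ univ.filter (fun i => a i ≠ 0), |b i - a i| :=
    sum_le_sum fun i _ => by rw [abs_sub_comm]; exact abs_sub_abs_le_abs_sub _ _
  have off_support : ∑ i ∈ univ.filter (fun i => a i = 0), (|a i| - |b i|)
      = -∑ i ∈ univ.filter (fun i => a i = 0), |b i - a i| := by
    rw [← sum_neg_distrib]
    exact sum_congr rfl fun i hi => by simp [(mem_filter.mp hi).2]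
  linarith

theorem sum_abs_le_sqrt_card_mul_sqrt_sum_sq (S : Finset ι) (v : ι → ℝ) :
    ∑ i ∈ S, |v i| ≤ √(#S : ℝ) * √(∑ i, v i ^ 2) := by
  rw [← Real.sqrt_mul (Nat.cast_nonneg _)]
  refine Real.le_sqrt_of_sq_le ?_
  calc (∑ i ∈ S, |v i|) ^ 2 ≤ #S * ∑ i ∈ S, |v i| ^ 2 := by
        exact_mod_cast sq_sum_le_card_mul_sum_sq (s := S) (f := fun i => |v i|)
    _ ≤ #S * ∑ i, v i ^ 2 := by
        simp only [sq_abs]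
        gcongr
        exact subset_univ S

noncomputable def sqLoss (X : Matrix τ ι ℝ) (y : τ → ℝ) (T : ℝ) (v : ι → ℝ) : ℝ :=
  1 / (2 * T) * ∑ t, (y t - (X *ᵥ v) t) ^ 2

noncomputable def sqLossGrad (X : Matrix τ ι ℝ) (y : τ → ℝ) (T : ℝ) (v : ι → ℝ) : ι → ℝ :=
  (1 / T) • (Xᵀ *ᵥ (X *ᵥ v - y))

noncomputable def lassoObjective (X : Matrix τ ι ℝ) (y : τ → ℝ) (T lam : ℝ) (v : ι → ℝ) : ℝ :=
  sqLoss X y T v + lam * ∑ i, |v i|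

theorem sqLossGrad_dotProduct (X : Matrix τ ι ℝ) (y : τ → ℝ) (T : ℝ) (v h : ι → ℝ) :
    sqLossGrad X y T v ⬝ᵥ h = 1 / T * ((X *ᵥ v - y) ⬝ᵥ (X *ᵥ h)) := by
  rw [sqLossGrad, smul_dotProduct, mulVec_transpose, ← dotProduct_mulVec, smul_eq_mul]

theorem sqLoss_add (X : Matrix τ ι ℝ) (y : τ → ℝ) (T : ℝ) (v h : ι → ℝ) :
    sqLoss X y T (v + h)
      = sqLoss X y T v + sqLossGrad X y T v ⬝ᵥ h + 1 / (2 * T) * ∑ t, (X *ᵥ h) t ^ 2 := by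
  rw [sqLoss, sqLoss, sqLossGrad_dotProduct, mulVec_add]
  simp only [dotProduct, Pi.add_apply, Pi.sub_apply, mul_sum, ← sum_add_distrib]
  exact sum_congr rfl fun t _ => by ring

theorem sqLossGrad_sub_dotProduct (X : Matrix τ ι ℝ) (y : τ → ℝ) (T : ℝ) (v w : ι → ℝ) :
    (sqLossGrad X y T w - sqLossGrad X y T v) ⬝ᵥ (w - v) = 1 / T * ∑ t, (X *ᵥ (w - v)) t ^ 2 := by
  rw [sub_dotProduct, sqLossGrad_dotProduct, sqLossGrad_dotProduct, ← mul_sub, ← sub_dotProduct,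
    sub_sub_sub_cancel_right, ← mulVec_sub]
  simp only [dotProduct, sq]

theorem sum_lassoObjective_transpose (X : Matrix τ ι ℝ) (Y : Matrix τ κ ℝ) (T lam : ℝ)
    (Θ : Matrix ι κ ℝ) :
    ∑ j, lassoObjective X (Yᵀ j) T lam (Θᵀ j)
      = 1 / (2 * T) * (∑ t, ∑ j, (Y t j - (X * Θ) t j) ^ 2) + lam * ∑ i, ∑ j, |Θ i j| := by
  rw [sum_comm (f := fun t j => (Y t j - (X * Θ) t j) ^ 2), sum_comm (f := fun i j => |Θ i j|),
    mul_sum, mul_sum, ← sum_add_distrib]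
  rfl

theorem lasso_basic_inequality (X : Matrix τ ι ℝ) (y : τ → ℝ) (T : ℝ) {lam : ℝ} (hlam : 0 ≤ lam)
    (β β' : ι → ℝ) (hgrad : ∀ i, |sqLossGrad X y T β i| ≤ lam / 2)
    (hle : lassoObjective X y T lam β' ≤ lassoObjective X y T lam β) :
    1 / (2 * T) * ∑ t, (X *ᵥ (β' - β)) t ^ 2
      ≤ 3 / 2 * lam * ∑ i ∈ univ.filter (fun i => β i ≠ 0), |β' i - β i| := by
  have expansion := sqLoss_add X y T β (β' - β)
  rw [add_sub_cancel] at expansion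
  have gradient_term := abs_dotProduct_le_mul_sum_abs _ (β' - β) hgrad
  simp only [Pi.sub_apply] at gradient_term
  have penalty_term := mul_le_mul_of_nonneg_left (sum_abs_sub_sum_abs_le β β') hlam
  have split : ∑ i ∈ univ.filter (fun i => β i ≠ 0), |β' i - β i|
      + ∑ i ∈ univ.filter (fun i => β i = 0), |β' i - β i| = ∑ i, |β' i - β i| :=
    sum_filter_not_add_sum_filter univ (fun i => β i = 0) _
  rw [← split] at gradient_term
  have off_support_nonneg : 0 ≤ lam * ∑ i ∈ univ.filter (fun i => β i = 0), |β' i - β i| :=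
    mul_nonneg hlam (sum_nonneg fun i _ => abs_nonneg _)
  unfold lassoObjective at hle
  linarith [neg_abs_le (sqLossGrad X y T β ⬝ᵥ (β' - β))]

theorem lasso_sqLossGrad_sub_dotProduct_le (X : Matrix τ ι ℝ) (y : τ → ℝ) (T : ℝ) {lam : ℝ}
    (hlam : 0 ≤ lam) (β β' : ι → ℝ) (s : ℕ) (hgrad : ∀ i, |sqLossGrad X y T β i| ≤ lam / 2)
    (hsupp : #(univ.filter (fun i => β i ≠ 0)) ≤ s)
    (hle : lassoObjective X y T lam β' ≤ lassoObjective X y T lam β) :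
    (sqLossGrad X y T β' - sqLossGrad X y T β) ⬝ᵥ (β' - β)
      ≤ 3 * lam * √s * √(∑ i, (β' i - β i) ^ 2) :=
  calc (sqLossGrad X y T β' - sqLossGrad X y T β) ⬝ᵥ (β' - β)
      = 2 * (1 / (2 * T) * ∑ t, (X *ᵥ (β' - β)) t ^ 2) := by
        rw [sqLossGrad_sub_dotProduct]; ring
    _ ≤ 2 * (3 / 2 * lam * ∑ i ∈ univ.filter (fun i => β i ≠ 0), |β' i - β i|) := by
        linarith [lasso_basic_inequality X y T hlam β β' hgrad hle]
    _ ≤ 3 * lam * (√(#(univ.filter (fun i => β i ≠ 0)) : ℝ) * √(∑ i, (β' i - β i) ^ 2)) := by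
        have := sum_abs_le_sqrt_card_mul_sqrt_sum_sq (univ.filter (fun i => β i ≠ 0)) (β' - β)
        simp only [Pi.sub_apply] at this
        linarith [mul_le_mul_of_nonneg_left this (by positivity : (0 : ℝ) ≤ 3 * lam)]
    _ ≤ 3 * lam * √s * √(∑ i, (β' i - β i) ^ 2) := by
        rw [← mul_assoc]; gcongr

end

theorem bregman_divergence_bound_general (T m d s : ℕ)
    (Y : Matrix (Fin T) (Fin d) ℝ) (X : Matrix (Fin T) (Fin m) ℝ)
    (lam : ℝ) (hlam : 0 < lam)
    (Θstar Θhat : Matrix (Fin m) (Fin d) ℝ)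
    (hgrad : ∀ (i : Fin m) (j : Fin d),
      |((1 / (T : ℝ)) • (Xᵀ * (X * Θstar - Y))) i j| ≤ lam / 2)
    (hsupp : ∀ j : Fin d,
      (Finset.univ.filter (fun i : Fin m => Θstar i j ≠ 0)).card ≤ s)
    (hmin : ∀ Θ : Matrix (Fin m) (Fin d) ℝ,
      (1 / (2 * (T : ℝ))) * (∑ t, ∑ j, (Y t j - (X * Θhat) t j) ^ 2)
          + lam * ∑ i, ∑ j, |Θhat i j|
        ≤ (1 / (2 * (T : ℝ))) * (∑ t, ∑ j, (Y t j - (X * Θ) t j) ^ 2)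
          + lam * ∑ i, ∑ j, |Θ i j|) :
    ∀ j : Fin d,
      ∑ i, (((1 / (T : ℝ)) • (Xᵀ * (X * Θhat - Y))) i j
              - ((1 / (T : ℝ)) • (Xᵀ * (X * Θstar - Y))) i j)
            * (Θhat i j - Θstar i j)
        ≤ 6 * lam * Real.sqrt s * Real.sqrt (∑ i, (Θhat i j - Θstar i j) ^ 2) := by
  intro j
  have column_le : lassoObjective X (Yᵀ j) T lam (Θhatᵀ j)
      ≤ lassoObjective X (Yᵀ j) T lam (Θstarᵀ j) := by
    refine le_of_sum_le_sum_update (fun k => lassoObjective X (Yᵀ k) T lam) Θhatᵀ j _ ?_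
    have := hmin (updateRow Θhatᵀ j (Θstarᵀ j))ᵀ
    rwa [← sum_lassoObjective_transpose, ← sum_lassoObjective_transpose, transpose_transpose] at this
  have bound := lasso_sqLossGrad_sub_dotProduct_le X (Yᵀ j) T hlam.le (Θstarᵀ j) (Θhatᵀ j) s
    (fun i => hgrad i j) (hsupp j) column_le
  refine bound.trans ?_
  simp only [transpose_apply]
  gcongr
  norm_num

/-- Bound on the symmetric Bregman divergence term: under `‖∇L(Θ*)‖_{∞,∞} ≤ λ/2` and
column supports of size at most `s`, every global minimizer `Θ̂` of
`Θ ↦ L(Θ) + λ‖Θ‖_{1,1}` satisfies, for each column `j`,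
`⟨(∇L(Θ̂))_{·,j} − (∇L(Θ*))_{·,j}, Θ̂_{·,j} − Θ*_{·,j}⟩ ≤ 6 λ √s ‖Θ̂_{·,j} − Θ*_{·,j}‖₂`. -/
theorem bregman_divergence_bound (T m d s : ℕ) (hT : 0 < T) (hm : 0 < m) (hd : 0 < d)
    (hs : 0 < s)
    (Y : Matrix (Fin T) (Fin d) ℝ) (X : Matrix (Fin T) (Fin m) ℝ)
    (lam : ℝ) (hlam : 0 < lam)
    (Θstar Θhat : Matrix (Fin m) (Fin d) ℝ)
    (hgrad : ∀ (i : Fin m) (j : Fin d),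
      |((1 / (T : ℝ)) • (Xᵀ * (X * Θstar - Y))) i j| ≤ lam / 2)
    (hsupp : ∀ j : Fin d,
      (Finset.univ.filter (fun i : Fin m => Θstar i j ≠ 0)).card ≤ s)
    (hmin : ∀ Θ : Matrix (Fin m) (Fin d) ℝ,
      (1 / (2 * (T : ℝ))) * (∑ t, ∑ j, (Y t j - (X * Θhat) t j) ^ 2)
          + lam * ∑ i, ∑ j, |Θhat i j|
        ≤ (1 / (2 * (T : ℝ))) * (∑ t, ∑ j, (Y t j - (X * Θ) t j) ^ 2)
          + lam * ∑ i, ∑ j, |Θ i j|) :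
    ∀ j : Fin d,
      ∑ i, (((1 / (T : ℝ)) • (Xᵀ * (X * Θhat - Y))) i j
              - ((1 / (T : ℝ)) • (Xᵀ * (X * Θstar - Y))) i j)
            * (Θhat i j - Θstar i j)
        ≤ 6 * lam * Real.sqrt s * Real.sqrt (∑ i, (Θhat i j - Θstar i j) ^ 2) :=
  bregman_divergence_bound_general T m d s Y X lam hlam Θstar Θhat hgrad hsupp hmin
end

section
/- Let r₁, r₂ : Ω → ℝ be random variables with E|r_i|^{4+4ε} ≤ M₄ for each i (so that the product r₁r₂ is integrable by Hölder's inequality). Then for every τ > 0, | E[r₁ r₂] − E[ψ_τ(r₁) ψ_τ(r₂)] | ≤ 2 M₄ / τ^{2+4ε}. -/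
open MeasureTheory

/-- The truncation operator `ψ_τ(x) = sign(x) · min(|x|, τ)`. -/
noncomputable def trunc (τ x : ℝ) : ℝ := Real.sign x * min |x| τ

/-! Pointwise, `x * y - ψ_τ(x) * ψ_τ(y)` vanishes unless `m = max |x| |y| > τ`, and then it is at
most `|x| * |y| ≤ m ^ 2 ≤ m ^ p / τ ^ (p - 2) ≤ (|x| ^ p + |y| ^ p) / τ ^ (p - 2)`, here with
`p = 4 + 4ε`. Integrating this bound gives the theorem. The same bound also shows that `r₁ r₂` is
integrable, because it differs from the bounded product `ψ_τ(r₁) ψ_τ(r₂)` by a dominated function. -/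

namespace Real

theorem sign_mul_abs (x : ℝ) : sign x * |x| = x := by
  rcases lt_trichotomy x 0 with h | rfl | h
  · rw [sign_of_neg h, abs_of_neg h, neg_one_mul, neg_neg]
  · rw [abs_zero, mul_zero]
  · rw [sign_of_pos h, abs_of_pos h, one_mul]

theorem abs_sign_le_one (x : ℝ) : |sign x| ≤ 1 := by
  rcases sign_apply_eq x with h | h | h <;> simp [h]

theorem measurable_sign : Measurable sign :=
  measurable_const.ite measurableSet_Iio (measurable_const.ite measurableSet_Ioi measurable_const)

end Real

theorem abs_trunc {τ : ℝ} (hτ : 0 ≤ τ) (x : ℝ) : |trunc τ x| = min |x| τ := by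
  rw [trunc, abs_mul, abs_of_nonneg (le_min (abs_nonneg x) hτ)]
  rcases eq_or_ne x 0 with rfl | hx
  · simp [hτ]
  · rcases Real.sign_apply_eq_of_ne_zero x hx with h | h <;> simp [h]

theorem trunc_of_abs_le {τ x : ℝ} (h : |x| ≤ τ) : trunc τ x = x := by
  rw [trunc, min_eq_left h, Real.sign_mul_abs]

@[fun_prop]
theorem measurable_trunc (τ : ℝ) : Measurable (trunc τ) :=
  Real.measurable_sign.mul (measurable_abs.min measurable_const)

theorem abs_mul_sub_trunc_mul_trunc_le_abs_mul {τ : ℝ} (hτ : 0 ≤ τ) (x y : ℝ) :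
    |x * y - trunc τ x * trunc τ y| ≤ |x| * |y| := by
  have hsign : x * y - trunc τ x * trunc τ y
      = Real.sign x * Real.sign y * (|x| * |y| - min |x| τ * min |y| τ) := by
    rw [trunc, trunc]
    nth_rw 1 [← Real.sign_mul_abs x, ← Real.sign_mul_abs y]
    ring
  have htrunc_nonneg : 0 ≤ min |x| τ * min |y| τ := by positivity
  have htrunc_le : min |x| τ * min |y| τ ≤ |x| * |y| :=
    mul_le_mul (min_le_left _ _) (min_le_left _ _) (by positivity) (abs_nonneg x)
  have hsign_le : |Real.sign x * Real.sign y| ≤ 1 := by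
    rw [abs_mul]
    exact mul_le_one₀ (Real.abs_sign_le_one x) (abs_nonneg _) (Real.abs_sign_le_one y)
  rw [hsign, abs_mul, abs_of_nonneg (sub_nonneg.2 htrunc_le)]
  calc |Real.sign x * Real.sign y| * (|x| * |y| - min |x| τ * min |y| τ)
      ≤ |x| * |y| - min |x| τ * min |y| τ :=
        mul_le_of_le_one_left (sub_nonneg.2 htrunc_le) hsign_le
    _ ≤ |x| * |y| := sub_le_self _ htrunc_nonneg

theorem abs_mul_sub_trunc_mul_trunc_le {p τ : ℝ} (hp : 2 ≤ p) (hτ : 0 < τ) (x y : ℝ) :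
    |x * y - trunc τ x * trunc τ y| ≤ (|x| ^ p + |y| ^ p) / τ ^ (p - 2) := by
  set m := max |x| |y| with hm_def
  rcases le_or_gt m τ with hm | hm
  · rw [trunc_of_abs_le ((le_max_left _ _).trans hm), trunc_of_abs_le ((le_max_right _ _).trans hm),
      sub_self, abs_zero]
    positivity
  have hm0 : 0 < m := hτ.trans hm
  rw [le_div_iff₀ (by positivity)]
  calc |x * y - trunc τ x * trunc τ y| * τ ^ (p - 2) ≤ (m * m) * m ^ (p - 2) := by
        gcongr
        exact (abs_mul_sub_trunc_mul_trunc_le_abs_mul hτ.le x y).trans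
          (mul_le_mul (le_max_left _ _) (le_max_right _ _) (abs_nonneg y) hm0.le)
    _ = m ^ p := by
        rw [← sq, ← Real.rpow_two, ← Real.rpow_add hm0, add_sub_cancel]
    _ ≤ |x| ^ p + |y| ^ p := by
        rcases max_choice |x| |y| with h | h <;> rw [hm_def, h] <;> linarith [
          Real.rpow_nonneg (abs_nonneg x) p, Real.rpow_nonneg (abs_nonneg y) p]

section

variable {Ω : Type*} [MeasurableSpace Ω] {μ : Measure Ω} {X Y : Ω → ℝ} {p τ : ℝ}

theorem integrable_trunc_mul_trunc [IsFiniteMeasure μ] (hτ : 0 ≤ τ) (hX : AEMeasurable X μ)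
    (hY : AEMeasurable Y μ) : Integrable (fun ω => trunc τ (X ω) * trunc τ (Y ω)) μ := by
  refine Integrable.of_bound (by fun_prop) (τ * τ) (ae_of_all _ fun ω => ?_)
  rw [Real.norm_eq_abs, abs_mul, abs_trunc hτ, abs_trunc hτ]
  exact mul_le_mul (min_le_right _ _) (min_le_right _ _) (by positivity) hτ

theorem integrable_mul_sub_trunc_mul_trunc (hp : 2 ≤ p) (hτ : 0 < τ) (hX : AEMeasurable X μ)
    (hY : AEMeasurable Y μ) (hXp : Integrable (fun ω => |X ω| ^ p) μ)
    (hYp : Integrable (fun ω => |Y ω| ^ p) μ) :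
    Integrable (fun ω => X ω * Y ω - trunc τ (X ω) * trunc τ (Y ω)) μ :=
  ((hXp.add hYp).div_const _).mono' (by fun_prop)
    (ae_of_all _ fun ω => abs_mul_sub_trunc_mul_trunc_le hp hτ (X ω) (Y ω))

theorem abs_integral_mul_sub_integral_trunc_mul_trunc_le [IsFiniteMeasure μ] (hp : 2 ≤ p)
    (hτ : 0 < τ) (hX : AEMeasurable X μ) (hY : AEMeasurable Y μ)
    (hXp : Integrable (fun ω => |X ω| ^ p) μ) (hYp : Integrable (fun ω => |Y ω| ^ p) μ) :
    |∫ ω, X ω * Y ω ∂μ - ∫ ω, trunc τ (X ω) * trunc τ (Y ω) ∂μ|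
      ≤ ((∫ ω, |X ω| ^ p ∂μ) + ∫ ω, |Y ω| ^ p ∂μ) / τ ^ (p - 2) := by
  have hT := integrable_trunc_mul_trunc hτ.le hX hY
  have hD := integrable_mul_sub_trunc_mul_trunc hp hτ hX hY hXp hYp
  have hXY : Integrable (fun ω => X ω * Y ω) μ :=
    (hD.add hT).congr (ae_of_all _ fun ω => sub_add_cancel _ _)
  rw [← integral_sub hXY hT, ← integral_add hXp hYp, ← integral_div]
  exact abs_integral_le_integral_abs.trans (integral_mono hD.abs ((hXp.add hYp).div_const _)
    fun ω => abs_mul_sub_trunc_mul_trunc_le hp hτ (X ω) (Y ω))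

end

theorem truncation_bias_second_moment_general {Ω : Type*} [MeasurableSpace Ω]
    (P : Measure Ω) [IsProbabilityMeasure P]
    (ε M₄ : ℝ) (hε : 0 < ε)
    (r : Fin 2 → Ω → ℝ) (hmeas : ∀ i, Measurable (r i))
    (hint : ∀ i, Integrable (fun ω => |r i ω| ^ (4 + 4 * ε)) P)
    (hmom : ∀ i, ∫ ω, |r i ω| ^ (4 + 4 * ε) ∂P ≤ M₄)
    (τ : ℝ) (hτ : 0 < τ) :
    |(∫ ω, r 0 ω * r 1 ω ∂P) - ∫ ω, trunc τ (r 0 ω) * trunc τ (r 1 ω) ∂P|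
      ≤ 2 * M₄ / τ ^ (2 + 4 * ε) := by
  have hp : (2 : ℝ) ≤ 4 + 4 * ε := by linarith
  calc _ ≤ ((∫ ω, |r 0 ω| ^ (4 + 4 * ε) ∂P) + ∫ ω, |r 1 ω| ^ (4 + 4 * ε) ∂P)
          / τ ^ (4 + 4 * ε - 2) :=
        abs_integral_mul_sub_integral_trunc_mul_trunc_le hp hτ (hmeas 0).aemeasurable
          (hmeas 1).aemeasurable (hint 0) (hint 1)
    _ ≤ 2 * M₄ / τ ^ (2 + 4 * ε) := by
        rw [show (4 + 4 * ε - 2 : ℝ) = 2 + 4 * ε by ring]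
        gcongr
        linarith [hmom 0, hmom 1]

/-- Truncation bias for a product of two random variables: if `E|rᵢ|^{4+4ε} ≤ M₄` for
each `i`, then for every `τ > 0`,
`|E[r₁r₂] − E[ψ_τ(r₁)ψ_τ(r₂)]| ≤ 2 M₄ / τ^{2+4ε}`. -/
theorem truncation_bias_second_moment {Ω : Type*} [MeasurableSpace Ω]
    (P : Measure Ω) [IsProbabilityMeasure P]
    (ε M₄ : ℝ) (hε : 0 < ε) (hε1 : ε ≤ 1) (hM : 0 < M₄)
    (r : Fin 2 → Ω → ℝ) (hmeas : ∀ i, Measurable (r i))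
    (hint : ∀ i, Integrable (fun ω => |r i ω| ^ (4 + 4 * ε)) P)
    (hmom : ∀ i, ∫ ω, |r i ω| ^ (4 + 4 * ε) ∂P ≤ M₄)
    (τ : ℝ) (hτ : 0 < τ) :
    |(∫ ω, r 0 ω * r 1 ω ∂P) - ∫ ω, trunc τ (r 0 ω) * trunc τ (r 1 ω) ∂P|
      ≤ 2 * M₄ / τ ^ (2 + 4 * ε) :=
  truncation_bias_second_moment_general P ε M₄ hε r hmeas hint hmom τ hτ
end
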